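/- In the complete-randomization setting, assume N_q ≥ 2 for every q. Define Ŝ(q,q) = (N_q−1)^{-1} ∑_{i: Z_i=q} (Y_i(q) − Ŷ_q)², V̂_Ŷ = diag(N_q^{-1} Ŝ(q,q))_{q=1}^Q, and V̂_γ̂ = Fᵀ V̂_Ŷ F. Then E[V̂_γ̂] − V_γ̂ = N^{-1} Fᵀ S F; in particular E[V̂_γ̂] − V_γ̂ is positive semidefinite. -/

import Mathlib

open Finset Matrix MeasureTheory ProbabilityTheory
open scoped Classical

noncomputable section

/-- Expectation with respect to the uniform distribution on the symmetric group of
permutations of `{1,…,N}`. -/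
def pexp {N : ℕ} (f : Equiv.Perm (Fin N) → ℝ) : ℝ :=
  (∑ π : Equiv.Perm (Fin N), f π) / (Nat.factorial N : ℝ)

/-- Probability with respect to the uniform distribution on permutations of `{1,…,N}`. -/
def pprob {N : ℕ} (p : Equiv.Perm (Fin N) → Prop) : ℝ :=
  pexp (fun π => if p π then (1 : ℝ) else 0)

/-- Mean potential outcome `Ȳ(q)`. -/
def Ybar {N Q : ℕ} (Y : Fin N → Fin Q → ℝ) (q : Fin Q) : ℝ :=
  (∑ i, Y i q) / (N : ℝ)

/-- Finite-population covariance `S(q,q')`. -/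
def Svar {N Q : ℕ} (Y : Fin N → Fin Q → ℝ) (q q' : Fin Q) : ℝ :=
  (∑ i, (Y i q - Ybar Y q) * (Y i q' - Ybar Y q')) / ((N : ℝ) - 1)

/-- Maximum absolute deviation `M_N(q)`. -/
def MNdev {N Q : ℕ} (Y : Fin N → Fin Q → ℝ) (q : Fin Q) : ℝ :=
  ⨆ i : Fin N, |Y i q - Ybar Y q|

/-- Sample mean `Ŷ_q` in arm `q` under the assignment `Z_i = z(π(i))`. -/
def Yhat {N Q : ℕ} (Y : Fin N → Fin Q → ℝ) (z : Fin N → Fin Q) (Nq : Fin Q → ℕ)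
    (π : Equiv.Perm (Fin N)) (q : Fin Q) : ℝ :=
  (∑ i, if z (π i) = q then Y i q else 0) / (Nq q : ℝ)

/-- The covariance matrix `V_Ŷ = diag(N_q⁻¹ S(q,q)) − N⁻¹ S`. -/
def VYmat {N Q : ℕ} (Y : Fin N → Fin Q → ℝ) (Nq : Fin Q → ℕ) :
    Matrix (Fin Q) (Fin Q) ℝ :=
  Matrix.of fun q q' =>
    (if q = q' then Svar Y q q / (Nq q : ℝ) else 0) - Svar Y q q' / (N : ℝ)

/-- Smallest eigenvalue of a (symmetric) matrix, via the Rayleigh quotient. -/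
def lamMin {n : Type*} [Fintype n] (A : Matrix n n ℝ) : ℝ :=
  ⨅ x : {x : n → ℝ // (∑ i, x i ^ 2) = 1}, x.1 ⬝ᵥ A.mulVec x.1

/-- Largest eigenvalue of a (symmetric) matrix, via the Rayleigh quotient. -/
def lamMax {n : Type*} [Fintype n] (A : Matrix n n ℝ) : ℝ :=
  ⨆ x : {x : n → ℝ // (∑ i, x i ^ 2) = 1}, x.1 ⬝ᵥ A.mulVec x.1

/-- Standard normal cumulative distribution function. -/
def stdNormalCDF (t : ℝ) : ℝ :=
  ∫ x in Set.Iic t, (Real.sqrt (2 * Real.pi))⁻¹ * Real.exp (-(x ^ 2) / 2)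

/-- The standard Gaussian measure on `ℝ^H`. -/
def gaussianPi (H : ℕ) : Measure (Fin H → ℝ) :=
  Measure.pi fun _ : Fin H => gaussianReal 0 1

/-- Condition 1 with parameter `σF`:
`Fᵀ diag(N_q⁻¹ S(q,q)) F ⪯ σF² Fᵀ V_Ŷ F` in the Loewner order. -/
def CondOne {N Q H : ℕ} (Y : Fin N → Fin Q → ℝ) (Nq : Fin Q → ℕ)
    (F : Matrix (Fin Q) (Fin H) ℝ) (σF : ℝ) : Prop :=
  (σF ^ 2 • (Fᵀ * VYmat Y Nq * F) -
    Fᵀ * Matrix.diagonal (fun q => Svar Y q q / (Nq q : ℝ)) * F).PosSemidef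

/-- Condition 2 (proper contrast) with parameters `c, c'`. -/
def CondTwo {Q H : ℕ} (F : Matrix (Fin Q) (Fin H) ℝ) (c c' : ℝ) : Prop :=
  (∀ q h, |F q h| ≤ c / (Q : ℝ)) ∧ c' / (Q : ℝ) ≤ lamMin (Fᵀ * F)

/-- The standardized estimator `γ̃ = V_γ̂^{-1/2}(γ̂ − γ)`. -/
def tgam {N Q H : ℕ} (Y : Fin N → Fin Q → ℝ) (z : Fin N → Fin Q) (Nq : Fin Q → ℕ)
    (F : Matrix (Fin Q) (Fin H) ℝ) (hpd : (Fᵀ * VYmat Y Nq * F).PosDef)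
    (π : Equiv.Perm (Fin N)) : Fin H → ℝ :=
  ((hpd.posSemidef.1.eigenvectorUnitary.1 *
      Matrix.diagonal (Real.sqrt ∘ hpd.posSemidef.1.eigenvalues) *
      (star hpd.posSemidef.1.eigenvectorUnitary : Matrix (Fin H) (Fin H) ℝ))⁻¹).mulVec (Fᵀ.mulVec (Yhat Y z Nq π) - Fᵀ.mulVec (Ybar Y))

/-- Sample variance `Ŝ(q,q)` in arm `q`. -/
def Shat {N Q : ℕ} (Y : Fin N → Fin Q → ℝ) (z : Fin N → Fin Q) (Nq : Fin Q → ℕ)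
    (π : Equiv.Perm (Fin N)) (q : Fin Q) : ℝ :=
  (∑ i, if z (π i) = q then (Y i q - Yhat Y z Nq π q) ^ 2 else 0) / ((Nq q : ℝ) - 1)

lemma fiber_card {N : ℕ} (i a : Fin N) :
    (Finset.univ.filter fun π : Equiv.Perm (Fin N) => π i = a).card = Nat.factorial (N - 1) := by
  have hconst : ∀ b : Fin N,
      (Finset.univ.filter fun π : Equiv.Perm (Fin N) => π i = a).card =
      (Finset.univ.filter fun π : Equiv.Perm (Fin N) => π i = b).card := by
    intro b
    apply Finset.card_bij' (fun π _ => Equiv.swap a b * π) (fun π _ => Equiv.swap a b * π)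
    · intro π hπ
      simp only [Finset.mem_filter, Finset.mem_univ, true_and] at hπ ⊢
      simp [Equiv.Perm.mul_apply, hπ]
    · intro π hπ
      simp only [Finset.mem_filter, Finset.mem_univ, true_and] at hπ ⊢
      simp [Equiv.Perm.mul_apply, hπ]
    · intro π _; simp [← mul_assoc]
    · intro π _; simp [← mul_assoc]
  have hN : 0 < N := i.pos
  have htot : Nat.factorial N = ∑ b : Fin N,
      (Finset.univ.filter fun π : Equiv.Perm (Fin N) => π i = b).card := by
    rw [← Finset.card_eq_sum_card_fiberwise (f := fun π : Equiv.Perm (Fin N) => π i)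
      (t := Finset.univ) (fun _ _ => Finset.mem_univ _)]
    simp [Fintype.card_perm]
  have : Nat.factorial N = N * (Finset.univ.filter fun π : Equiv.Perm (Fin N) => π i = a).card := by
    rw [htot]
    rw [Finset.sum_congr rfl (fun b _ => (hconst b).symm)]
    simp [Finset.sum_const, mul_comm]
  have hfac := Nat.mul_factorial_pred hN.ne'
  exact Nat.eq_of_mul_eq_mul_left hN (by omega)

lemma exists_perm_two {N : ℕ} {a b a' b' : Fin N} (hab : a ≠ b) (hab' : a' ≠ b') :
    ∃ σ : Equiv.Perm (Fin N), σ a = a' ∧ σ b = b' := by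
  have h1 : Equiv.swap a a' b ≠ a' := by
    intro h
    have hb : b = a := by
      apply (Equiv.swap a a').injective
      rw [h, Equiv.swap_apply_left]
    exact hab (hb ▸ rfl)
  refine ⟨Equiv.swap (Equiv.swap a a' b) b' * Equiv.swap a a', ?_, ?_⟩
  · rw [Equiv.Perm.mul_apply, Equiv.swap_apply_left,
      Equiv.swap_apply_of_ne_of_ne (Ne.symm h1) hab']
  · rw [Equiv.Perm.mul_apply, Equiv.swap_apply_left]

lemma fiber_card2 {N : ℕ} {i j : Fin N} (hij : i ≠ j) {a b : Fin N} (hab : a ≠ b) :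
    (Finset.univ.filter fun π : Equiv.Perm (Fin N) => π i = a ∧ π j = b).card
      = Nat.factorial (N - 2) := by
  have hN : 2 ≤ N := by
    by_contra h
    push_neg at h
    interval_cases N <;> [exact absurd i.isLt (by omega); exact hab (Subsingleton.elim a b)]
  have hconst : ∀ p : Fin N × Fin N, p.1 ≠ p.2 →
      (Finset.univ.filter fun π : Equiv.Perm (Fin N) => π i = a ∧ π j = b).card =
      (Finset.univ.filter fun π : Equiv.Perm (Fin N) => π i = p.1 ∧ π j = p.2).card := by
    intro p hp
    obtain ⟨σ, h1, h2⟩ := exists_perm_two hab hp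
    apply Finset.card_bij' (fun π _ => σ * π) (fun π _ => σ⁻¹ * π)
    · intro π hπ
      simp only [Finset.mem_filter, Finset.mem_univ, true_and] at hπ ⊢
      simp [Equiv.Perm.mul_apply, hπ.1, hπ.2, h1, h2]
    · intro π hπ
      simp only [Finset.mem_filter, Finset.mem_univ, true_and] at hπ ⊢
      constructor
      · rw [Equiv.Perm.mul_apply, hπ.1, ← h1, Equiv.Perm.coe_inv, Equiv.symm_apply_apply]
      · rw [Equiv.Perm.mul_apply, hπ.2, ← h2, Equiv.Perm.coe_inv, Equiv.symm_apply_apply]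
    · intro π _; simp [← mul_assoc]
    · intro π _; simp [← mul_assoc]
  have hzero : ∀ p : Fin N × Fin N, p.1 = p.2 →
      (Finset.univ.filter fun π : Equiv.Perm (Fin N) => π i = p.1 ∧ π j = p.2).card = 0 := by
    intro p hp
    rw [Finset.card_eq_zero, Finset.filter_eq_empty_iff]
    rintro π _ ⟨hi', hj'⟩
    exact hij (π.injective (by rw [hi', hj', hp]))
  have htot : Nat.factorial N = ∑ p : Fin N × Fin N,
      (Finset.univ.filter fun π : Equiv.Perm (Fin N) => π i = p.1 ∧ π j = p.2).card := by
    have h := Finset.card_eq_sum_card_fiberwise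
      (f := fun π : Equiv.Perm (Fin N) => (π i, π j)) (s := Finset.univ)
      (t := Finset.univ) (fun _ _ => Finset.mem_univ _)
    simp only [Finset.card_univ, Fintype.card_perm, Fintype.card_fin] at h
    rw [h]
    exact Finset.sum_congr rfl fun p _ => by congr 1; ext π; simp [Prod.ext_iff]
  set c := (Finset.univ.filter fun π : Equiv.Perm (Fin N) => π i = a ∧ π j = b).card with hc
  have hfilter : (Finset.univ : Finset (Fin N × Fin N)).filter (fun p => p.1 ≠ p.2)
      = (Finset.univ : Finset (Fin N)).offDiag := by
    ext p; simp [Finset.mem_offDiag]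
  have hsum2 : Nat.factorial N = (N * N - N) * c := by
    rw [htot, ← Finset.sum_subset (Finset.filter_subset (fun p : Fin N × Fin N => p.1 ≠ p.2) Finset.univ)
      (fun p _ hp => hzero p (by simpa using hp))]
    rw [Finset.sum_congr rfl (fun p hp => (hconst p (Finset.mem_filter.mp hp).2).symm)]
    rw [Finset.sum_const, hfilter, Finset.offDiag_card]
    simp [smul_eq_mul]
  have hfac : Nat.factorial N = N * (N - 1) * Nat.factorial (N - 2) := by
    have h1 := Nat.mul_factorial_pred (n := N) (by omega)
    have h2 := Nat.mul_factorial_pred (n := N - 1) (by omega)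
    have : N - 1 - 1 = N - 2 := by omega
    rw [this] at h2
    rw [← h1, ← h2]; ring
  have hNN : N * N - N = N * (N - 1) := by rw [Nat.mul_sub, Nat.mul_one]
  rw [hNN] at hsum2
  have key : N * (N - 1) * c = N * (N - 1) * Nat.factorial (N - 2) := hsum2.symm.trans hfac
  exact Nat.eq_of_mul_eq_mul_left (Nat.mul_pos (by omega) (by omega)) key

lemma sum_perm_single {N : ℕ} (i : Fin N) (g : Fin N → ℝ) :
    ∑ π : Equiv.Perm (Fin N), g (π i) = (Nat.factorial (N - 1) : ℝ) * ∑ a, g a := by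
  rw [← Finset.sum_fiberwise (Finset.univ) (fun π : Equiv.Perm (Fin N) => π i)
    (fun π => g (π i)), Finset.mul_sum]
  refine Finset.sum_congr rfl fun a _ => ?_
  calc ∑ π ∈ Finset.univ.filter (fun π : Equiv.Perm (Fin N) => π i = a), g (π i)
      = ∑ _π ∈ Finset.univ.filter (fun π : Equiv.Perm (Fin N) => π i = a), g a :=
        Finset.sum_congr rfl fun π hπ => by rw [(Finset.mem_filter.mp hπ).2]
    _ = _ := by rw [Finset.sum_const, fiber_card i a, nsmul_eq_mul]

lemma sum_perm_pair {N : ℕ} {i j : Fin N} (hij : i ≠ j) (g : Fin N → Fin N → ℝ) :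
    ∑ π : Equiv.Perm (Fin N), g (π i) (π j)
      = (Nat.factorial (N - 2) : ℝ) * ∑ a, ∑ b ∈ Finset.univ.erase a, g a b := by
  rw [← Finset.sum_fiberwise (Finset.univ)
    (fun π : Equiv.Perm (Fin N) => (π i, π j)) (fun π => g (π i) (π j))]
  have hfib : ∀ p : Fin N × Fin N,
      (∑ π ∈ Finset.univ.filter (fun π : Equiv.Perm (Fin N) => (π i, π j) = p), g (π i) (π j))
      = (if p.1 = p.2 then 0 else (Nat.factorial (N - 2) : ℝ) * g p.1 p.2) := by
    intro p
    have hset : Finset.univ.filter (fun π : Equiv.Perm (Fin N) => (π i, π j) = p)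
        = Finset.univ.filter (fun π : Equiv.Perm (Fin N) => π i = p.1 ∧ π j = p.2) := by
      ext π; simp [Prod.ext_iff]
    rw [hset]
    by_cases hp : p.1 = p.2
    · rw [if_pos hp]
      have he : Finset.univ.filter (fun π : Equiv.Perm (Fin N) => π i = p.1 ∧ π j = p.2) = ∅ := by
        rw [Finset.filter_eq_empty_iff]
        rintro π _ ⟨hi', hj'⟩
        exact hij (π.injective (by rw [hi', hj', hp]))
      rw [he, Finset.sum_empty]
    · rw [if_neg hp]
      calc ∑ π ∈ Finset.univ.filter (fun π : Equiv.Perm (Fin N) => π i = p.1 ∧ π j = p.2),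
            g (π i) (π j)
          = ∑ _π ∈ Finset.univ.filter (fun π : Equiv.Perm (Fin N) => π i = p.1 ∧ π j = p.2),
            g p.1 p.2 :=
            Finset.sum_congr rfl fun π hπ => by
              rw [(Finset.mem_filter.mp hπ).2.1, (Finset.mem_filter.mp hπ).2.2]
        _ = _ := by rw [Finset.sum_const, fiber_card2 hij hp, nsmul_eq_mul]
  rw [Finset.sum_congr rfl fun p _ => hfib p, Fintype.sum_prod_type, Finset.mul_sum]
  refine Finset.sum_congr rfl fun a _ => ?_
  have h1 : ∀ b : Fin N, (if a = b then (0:ℝ) else (Nat.factorial (N - 2) : ℝ) * g a b)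
      = (Nat.factorial (N - 2) : ℝ) * g a b
        - (if b = a then (Nat.factorial (N - 2) : ℝ) * g a b else 0) := by
    intro b
    by_cases h : a = b
    · subst h; simp
    · rw [if_neg h, if_neg (fun hb => h hb.symm)]; ring
  rw [Finset.sum_congr rfl fun b _ => h1 b, Finset.sum_sub_distrib, Finset.sum_ite_eq',
    Finset.mul_sum, Finset.sum_erase_eq_sub (Finset.mem_univ a)]
  simp

lemma exp_Shat {N Q : ℕ} (hN : 2 ≤ N) (Nq : Fin Q → ℕ) (hNq : ∀ q, 2 ≤ Nq q)
    (Y : Fin N → Fin Q → ℝ) (z : Fin N → Fin Q)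
    (hz : ∀ q, (Finset.univ.filter fun i => z i = q).card = Nq q) (q : Fin Q) :
    pexp (fun π => Shat Y z Nq π q) = Svar Y q q := by
  set n : ℝ := (Nq q : ℝ) with hn
  have hn2 : (2 : ℝ) ≤ n := by rw [hn]; exact_mod_cast hNq q
  have hn0 : n ≠ 0 := by linarith
  have hn1 : n - 1 ≠ 0 := by linarith
  set Nr : ℝ := (N : ℝ) with hNr
  have hNr2 : (2 : ℝ) ≤ Nr := by rw [hNr]; exact_mod_cast hN
  have hNr0 : Nr ≠ 0 := by linarith
  have hNr1 : Nr - 1 ≠ 0 := by linarith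
  set χ : Fin N → ℝ := fun a => if z a = q then (1 : ℝ) else 0 with hχdef
  set w : Fin N → ℝ := fun i => Y i q with hwdef
  set P : ℝ := ∑ i, w i ^ 2 with hP
  set Sm : ℝ := ∑ i, w i with hSm
  have hχsum : ∑ a, χ a = n := by
    rw [hχdef]
    rw [Finset.sum_boole, hz q]
  have hχsq : ∀ a, χ a * χ a = χ a := by
    intro a; rw [hχdef]; by_cases h : z a = q <;> simp [h]
  have hχπ : ∀ π : Equiv.Perm (Fin N), ∑ i, χ (π i) = n := fun π => by
    rw [Equiv.sum_comp π χ, hχsum]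
  -- pointwise formula
  have hShat : ∀ π : Equiv.Perm (Fin N), Shat Y z Nq π q =
      ((∑ i, χ (π i) * w i ^ 2) - (∑ i, χ (π i) * w i) ^ 2 / n) / (n - 1) := by
    intro π
    unfold Shat Yhat
    set T : ℝ := ∑ i, if z (π i) = q then Y i q else 0 with hT
    have hT' : T = ∑ i, χ (π i) * w i := by
      refine Finset.sum_congr rfl fun i _ => ?_
      by_cases h : z (π i) = q <;> simp [hχdef, hwdef, h]
    have hterm : ∀ i, (if z (π i) = q then (Y i q - T / n) ^ 2 else 0)
        = χ (π i) * w i ^ 2 - (2 * (T / n)) * (χ (π i) * w i) + (T / n) ^ 2 * χ (π i) := by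
      intro i; by_cases h : z (π i) = q <;> simp [hχdef, hwdef, h] <;> ring
    rw [Finset.sum_congr rfl fun i _ => hterm i]
    rw [Finset.sum_add_distrib, Finset.sum_sub_distrib, ← Finset.mul_sum, ← Finset.mul_sum,
      hχπ π, hT']
    congr 1
    field_simp
    ring
  -- factorial facts
  set K : ℝ := (Nat.factorial (N - 2) : ℝ) with hK
  have hK0 : K ≠ 0 := by
    rw [hK]; exact_mod_cast (Nat.factorial_pos (N - 2)).ne'
  have hF1 : (Nat.factorial (N - 1) : ℝ) = (Nr - 1) * K := by
    have h2 := Nat.mul_factorial_pred (n := N - 1) (by omega)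
    have he : N - 1 - 1 = N - 2 := by omega
    rw [he] at h2
    rw [← h2, hK, hNr]
    push_cast [Nat.cast_sub (by omega : 1 ≤ N)]
    ring
  have hFN : (Nat.factorial N : ℝ) = Nr * ((Nr - 1) * K) := by
    rw [← hF1, ← Nat.mul_factorial_pred (by omega : N ≠ 0), hNr]
    push_cast
    ring
  have hχoff : ∑ a, ∑ b ∈ Finset.univ.erase a, χ a * χ b = n * n - n := by
    have h1 : ∀ a, ∑ b ∈ Finset.univ.erase a, χ a * χ b = χ a * (n - χ a) := by
      intro a
      rw [← Finset.mul_sum, Finset.sum_erase_eq_sub (Finset.mem_univ a), hχsum]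
    rw [Finset.sum_congr rfl fun a _ => h1 a]
    simp only [mul_sub]
    rw [Finset.sum_sub_distrib, ← Finset.sum_mul, hχsum,
      Finset.sum_congr rfl fun a _ => hχsq a, hχsum]
  have hA : (∑ π : Equiv.Perm (Fin N), ∑ i, χ (π i) * w i ^ 2) = (Nr - 1) * K * (n * P) := by
    rw [Finset.sum_comm]
    have h1 : ∀ i : Fin N, (∑ π : Equiv.Perm (Fin N), χ (π i) * w i ^ 2)
        = (Nr - 1) * K * (n * w i ^ 2) := by
      intro i
      rw [sum_perm_single i (fun a => χ a * w i ^ 2), ← Finset.sum_mul, hχsum, hF1]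
    rw [Finset.sum_congr rfl fun i _ => h1 i, hP]
    simp only [Finset.mul_sum]
  have hB : (∑ π : Equiv.Perm (Fin N), (∑ i, χ (π i) * w i) ^ 2)
      = (Nr - 1) * K * (n * P) + K * ((n * n - n) * (Sm * Sm - P)) := by
    have hsq2 : ∀ π : Equiv.Perm (Fin N), (∑ i, χ (π i) * w i) ^ 2
        = ∑ i, ∑ j, (χ (π i) * w i) * (χ (π j) * w j) := by
      intro π; rw [sq, Finset.sum_mul_sum]
    rw [Finset.sum_congr rfl fun π _ => hsq2 π, Finset.sum_comm]
    have hi : ∀ i : Fin N,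
        (∑ π : Equiv.Perm (Fin N), ∑ j, (χ (π i) * w i) * (χ (π j) * w j))
        = (Nr - 1) * K * (n * w i ^ 2)
          + K * ((n * n - n) * (w i * (Sm - w i))) := by
      intro i
      rw [Finset.sum_comm]
      rw [← Finset.add_sum_erase (Finset.univ : Finset (Fin N))
        (fun j => ∑ π : Equiv.Perm (Fin N), (χ (π i) * w i) * (χ (π j) * w j))
        (Finset.mem_univ i)]
      congr 1
      · have hd : ∀ π : Equiv.Perm (Fin N),
            (χ (π i) * w i) * (χ (π i) * w i) = χ (π i) * w i ^ 2 := by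
          intro π
          calc (χ (π i) * w i) * (χ (π i) * w i)
              = (χ (π i) * χ (π i)) * w i ^ 2 := by ring
            _ = χ (π i) * w i ^ 2 := by rw [hχsq]
        rw [Finset.sum_congr rfl fun π _ => hd π,
          sum_perm_single i (fun a => χ a * w i ^ 2), ← Finset.sum_mul, hχsum, hF1]
      · have hoff : ∀ j ∈ Finset.univ.erase i,
            (∑ π : Equiv.Perm (Fin N), (χ (π i) * w i) * (χ (π j) * w j))
            = K * ((n * n - n) * (w i * w j)) := by
          intro j hj
          have hij : i ≠ j := Ne.symm (Finset.mem_erase.mp hj).1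
          rw [sum_perm_pair hij (fun a b => (χ a * w i) * (χ b * w j))]
          have h2 : (∑ a, ∑ b ∈ Finset.univ.erase a, (χ a * w i) * (χ b * w j))
              = (w i * w j) * (∑ a, ∑ b ∈ Finset.univ.erase a, χ a * χ b) := by
            rw [Finset.mul_sum]
            refine Finset.sum_congr rfl fun a _ => ?_
            rw [Finset.mul_sum]
            exact Finset.sum_congr rfl fun b _ => by ring
          rw [h2, hχoff, hK]
          ring
        rw [Finset.sum_congr rfl hoff]
        have h3 : K * ((n * n - n) * (w i * (Sm - w i)))
            = ∑ j ∈ Finset.univ.erase i, K * ((n * n - n) * (w i * w j)) := by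
          rw [hSm, ← Finset.sum_erase_eq_sub (Finset.mem_univ i)]
          simp only [Finset.mul_sum]
        rw [← h3]
    rw [Finset.sum_congr rfl fun i _ => hi i, Finset.sum_add_distrib]
    congr 1
    · rw [hP]
      simp only [Finset.mul_sum]
    · have h4 : (∑ i, w i * (Sm - w i)) = Sm * Sm - P := by
        have h5 : ∀ i : Fin N, w i * (Sm - w i) = w i * Sm - w i ^ 2 := fun i => by ring
        rw [Finset.sum_congr rfl fun i _ => h5 i, Finset.sum_sub_distrib, ← Finset.sum_mul,
          ← hSm, ← hP]
      rw [← h4]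
      simp only [Finset.mul_sum]
  have hSvar : Svar Y q q = (P - Sm * Sm / Nr) / (Nr - 1) := by
    unfold Svar Ybar
    simp only [hP, hSm, hNr, hwdef]
    have hexp : ∀ i : Fin N, (Y i q - (∑ k, Y k q) / (N : ℝ)) * (Y i q - (∑ k, Y k q) / (N : ℝ))
        = Y i q ^ 2 - (2 * ((∑ k, Y k q) / (N : ℝ))) * Y i q
          + ((∑ k, Y k q) / (N : ℝ)) * ((∑ k, Y k q) / (N : ℝ)) := fun i => by ring
    rw [Finset.sum_congr rfl fun i _ => hexp i, Finset.sum_add_distrib, Finset.sum_sub_distrib,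
      ← Finset.mul_sum, Finset.sum_const, Finset.card_univ, Fintype.card_fin, nsmul_eq_mul]
    have hNR0 : (N : ℝ) ≠ 0 := by rw [← hNr]; exact hNr0
    congr 1
    field_simp
    ring
  unfold pexp
  rw [Finset.sum_congr rfl fun π _ => hShat π]
  have hsplit : (∑ π : Equiv.Perm (Fin N),
        ((∑ i, χ (π i) * w i ^ 2) - (∑ i, χ (π i) * w i) ^ 2 / n) / (n - 1))
      = ((∑ π : Equiv.Perm (Fin N), ∑ i, χ (π i) * w i ^ 2)
          - (∑ π : Equiv.Perm (Fin N), (∑ i, χ (π i) * w i) ^ 2) / n) / (n - 1) := by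
    rw [← Finset.sum_div]
    congr 1
    rw [Finset.sum_sub_distrib, ← Finset.sum_div]
  rw [hsplit, hA, hB, hFN, hSvar]
  field_simp
  ring

lemma posSemidef_smul_nonneg {n : Type*} [Fintype n] {M : Matrix n n ℝ}
    (hM : M.PosSemidef) {c : ℝ} (hc : 0 ≤ c) : (c • M).PosSemidef := by
  exact hM.smul hc

/-- Theorem 3(i): conservativeness of the covariance estimator,
`E[V̂_γ̂] − V_γ̂ = N⁻¹ Fᵀ S F ⪰ 0`. -/
theorem stmt14 (N Q H : ℕ) (hN : 2 ≤ N) (hQ : 1 ≤ Q)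
    (Nq : Fin Q → ℕ) (hNq : ∀ q, 2 ≤ Nq q) (hsum : (∑ q, Nq q) = N)
    (Y : Fin N → Fin Q → ℝ) (z : Fin N → Fin Q)
    (hz : ∀ q, (Finset.univ.filter fun i => z i = q).card = Nq q)
    (F : Matrix (Fin Q) (Fin H) ℝ) :
    (Matrix.of fun h l => pexp (fun π =>
        (Fᵀ * Matrix.diagonal (fun q => Shat Y z Nq π q / (Nq q : ℝ)) * F) h l))
        - Fᵀ * VYmat Y Nq * F
      = (N : ℝ)⁻¹ • (Fᵀ * (Matrix.of fun q q' => Svar Y q q') * F) ∧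
    ((Matrix.of fun h l => pexp (fun π =>
        (Fᵀ * Matrix.diagonal (fun q => Shat Y z Nq π q / (Nq q : ℝ)) * F) h l))
        - Fᵀ * VYmat Y Nq * F).PosSemidef := by
  have hentry : ∀ (d : Fin Q → ℝ) (h : Fin H) (l : Fin H),
      (Fᵀ * Matrix.diagonal d * F) h l = ∑ q, F q h * (d q * F q l) := by
    intro d h l
    rw [Matrix.mul_assoc, Matrix.mul_apply]
    refine Finset.sum_congr rfl fun q _ => ?_
    rw [Matrix.transpose_apply, Matrix.diagonal_mul]
  have hE : (Matrix.of fun h l => pexp (fun π =>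
        (Fᵀ * Matrix.diagonal (fun q => Shat Y z Nq π q / (Nq q : ℝ)) * F) h l))
      = Fᵀ * Matrix.diagonal (fun q => Svar Y q q / (Nq q : ℝ)) * F := by
    ext h l
    simp only [Matrix.of_apply]
    rw [show (fun π => (Fᵀ * Matrix.diagonal
        (fun q => Shat Y z Nq π q / (Nq q : ℝ)) * F) h l)
        = fun π => ∑ q, F q h * (Shat Y z Nq π q / (Nq q : ℝ) * F q l) from
      funext fun π => hentry _ h l]
    rw [hentry _ h l]
    unfold pexp
    rw [Finset.sum_comm, Finset.sum_div]
    refine Finset.sum_congr rfl fun q _ => ?_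
    have hq := exp_Shat hN Nq hNq Y z hz q
    unfold pexp at hq
    have hc : ∀ π : Equiv.Perm (Fin N),
        F q h * (Shat Y z Nq π q / (Nq q : ℝ) * F q l)
        = (F q h * F q l / (Nq q : ℝ)) * Shat Y z Nq π q := fun π => by ring
    rw [Finset.sum_congr rfl fun π _ => hc π, ← Finset.mul_sum, mul_div_assoc, hq]
    ring
  have hdiff : Matrix.diagonal (fun q => Svar Y q q / (Nq q : ℝ)) - VYmat Y Nq
      = (N : ℝ)⁻¹ • (Matrix.of fun q q' => Svar Y q q') := by
    ext q q'
    simp only [Matrix.sub_apply, Matrix.smul_apply, Matrix.of_apply, VYmat,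
      Matrix.diagonal_apply, smul_eq_mul]
    by_cases h : q = q'
    · subst h; simp only [if_pos rfl]; ring
    · simp only [if_neg h]; ring
  have part1 : (Matrix.of fun h l => pexp (fun π =>
        (Fᵀ * Matrix.diagonal (fun q => Shat Y z Nq π q / (Nq q : ℝ)) * F) h l))
        - Fᵀ * VYmat Y Nq * F
      = (N : ℝ)⁻¹ • (Fᵀ * (Matrix.of fun q q' => Svar Y q q') * F) := by
    rw [hE, ← Matrix.sub_mul, ← Matrix.mul_sub, hdiff, Matrix.mul_smul, Matrix.smul_mul]
  refine ⟨part1, ?_⟩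
  rw [part1]
  -- positive semidefiniteness
  set D : Matrix (Fin N) (Fin Q) ℝ := Matrix.of fun i q => Y i q - Ybar Y q with hD
  have hgram : (Matrix.of fun q q' => Svar Y q q') = ((N : ℝ) - 1)⁻¹ • (Dᵀ * D) := by
    ext q q'
    simp only [Matrix.of_apply, Matrix.smul_apply, Matrix.mul_apply,
      Matrix.transpose_apply, smul_eq_mul, hD]
    unfold Svar
    rw [div_eq_inv_mul]
  rw [hgram, Matrix.mul_smul, Matrix.smul_mul, smul_smul]
  have hassoc : Fᵀ * (Dᵀ * D) * F = (D * F)ᴴ * (D * F) := by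
    have hct : (D * F)ᴴ = (D * F)ᵀ := by
      ext i j
      simp [Matrix.conjTranspose_apply]
    rw [hct, Matrix.transpose_mul, Matrix.mul_assoc, Matrix.mul_assoc, Matrix.mul_assoc]
  rw [hassoc]
  have hN2 : (2 : ℝ) ≤ (N : ℝ) := by exact_mod_cast hN
  exact posSemidef_smul_nonneg (Matrix.posSemidef_conjTranspose_mul_self (D * F))
    (mul_nonneg (inv_nonneg.mpr (by linarith)) (inv_nonneg.mpr (by linarith)))
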